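/- Every monochromatic connected graph G with independence number at most 2 can be made properly connected by recoloring at most 2 edges (with new colors), i.e., pc_opt'(G) ≤ 2. -/

import Mathlib

/-!
If `G` is complete, nothing has to be recoloured. Otherwise fix nonadjacent `a`, `b`. Since
`α(G) ≤ 2`, every vertex lies in `N[a] ∪ N[b]`, and of any two nonadjacent vertices one lies in
`N[a]` and the other in `N[b]`; call them `u` and `v`. If `a` and `b` have a common neighbour `x`,
colour `ax` with `1` and `xb` with `2`: the path `u a x b v`, shortcut where vertices coincide, is
then coloured `0, 1, 2, 0`. Otherwise `N[a]` and `N[b]` are disjoint cliques, joined by an edge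
`xy` because `G` is connected, and colouring `xy` with `1` makes `u x y v` properly coloured.
-/

open SimpleGraph

/-- A walk is properly colored: no two consecutive edges share a color. -/
def ProperWalk {V : Type*} {G : SimpleGraph V} (c : Sym2 V → ℕ) {u v : V} (p : G.Walk u v) : Prop :=
  (p.edges.map c).Chain' (· ≠ ·)

/-- An edge-colored graph is properly connected. -/
def ProperlyConnected {V : Type*} (G : SimpleGraph V) (c : Sym2 V → ℕ) : Prop :=
  ∀ u v : V, u ≠ v → ∃ p : G.Walk u v, p.IsPath ∧ ProperWalk c p

/-- Number of edges recolored away from the base color 0. -/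
noncomputable def numRecolored {V : Type*} (G : SimpleGraph V) (c : Sym2 V → ℕ) : ℕ :=
  {e | e ∈ G.edgeSet ∧ c e ≠ 0}.ncard

/-- Number of new colors used. -/
noncomputable def numNewColors {V : Type*} (G : SimpleGraph V) (c : Sym2 V → ℕ) : ℕ :=
  (c '' {e | e ∈ G.edgeSet ∧ c e ≠ 0}).ncard

/-- Optimal proper connection number: minimum of p + q. -/
noncomputable def pcOpt {V : Type*} (G : SimpleGraph V) : ℕ :=
  sInf { n | ∃ c : Sym2 V → ℕ, ProperlyConnected G c ∧
    n = numRecolored G c + numNewColors G c }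

/-- Variant counting only the number of recolored edges. -/
noncomputable def pcOpt' {V : Type*} (G : SimpleGraph V) : ℕ :=
  sInf { p | ∃ c : Sym2 V → ℕ, ProperlyConnected G c ∧ p = numRecolored G c }

open Function

section

variable {V : Type*} {G : SimpleGraph V} {c : Sym2 V → ℕ}

def SimpleGraph.closedNeighborSet (G : SimpleGraph V) (v : V) : Set V :=
  insert v (G.neighborSet v)

@[simp]
theorem SimpleGraph.mem_closedNeighborSet {v w : V} :
    w ∈ G.closedNeighborSet v ↔ w = v ∨ G.Adj v w :=
  Iff.rfl

theorem SimpleGraph.mem_closedNeighborSet_comm {v w : V} :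
    w ∈ G.closedNeighborSet v ↔ v ∈ G.closedNeighborSet w := by
  simp [eq_comm, G.adj_comm]

theorem SimpleGraph.disjoint_closedNeighborSet {a b : V} (hab : a ≠ b) (hnab : ¬ G.Adj a b)
    (hcommon : ¬ ∃ x, G.Adj a x ∧ G.Adj x b) :
    Disjoint (G.closedNeighborSet a) (G.closedNeighborSet b) := by
  rw [Set.disjoint_left]
  rintro w (rfl | haw) (rfl | hbw)
  exacts [hab rfl, hnab hbw.symm, hnab haw, hcommon ⟨w, haw, hbw.symm⟩]

theorem properWalk_iff {u v : V} (p : G.Walk u v) :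
    ProperWalk c p ↔ (p.edges.map c).IsChain (· ≠ ·) :=
  Iff.rfl

theorem ProperWalk.reverse {u v : V} {p : G.Walk u v} (h : ProperWalk c p) :
    ProperWalk c p.reverse := by
  rw [properWalk_iff, Walk.edges_reverse, List.map_reverse, List.isChain_reverse]
  exact h.imp fun _ _ => Ne.symm

theorem exists_properPath_of_adj {u v : V} (h : G.Adj u v) :
    ∃ p : G.Walk u v, p.IsPath ∧ ProperWalk c p :=
  ⟨h.toWalk, by simp [h.ne], by simp [properWalk_iff]⟩

theorem properlyConnected_of_forall_adj (h : ∀ u v : V, u ≠ v → G.Adj u v) :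
    ProperlyConnected G c :=
  fun u v huv => exists_properPath_of_adj (h u v huv)

theorem pcOpt'_le_card_of_support_subset (hc : ProperlyConnected G c) (s : Finset (Sym2 V))
    (hs : c.support ⊆ s) : pcOpt' G ≤ s.card :=
  calc pcOpt' G ≤ numRecolored G c := Nat.sInf_le ⟨c, hc, rfl⟩
    _ ≤ (s : Set (Sym2 V)).ncard := Set.ncard_le_ncard (fun _ he => hs he.2) s.finite_toSet
    _ = s.card := Set.ncard_coe_finset s

theorem exists_properPath_through_commonNeighbor [DecidableEq V] {a b x u v : V} (hab : a ≠ b)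
    (hnab : ¬ G.Adj a b) (hax : G.Adj a x) (hxb : G.Adj x b) (hu : u ∈ G.closedNeighborSet a)
    (hv : v ∈ G.closedNeighborSet b) (huv : u ≠ v) (hnuv : ¬ G.Adj u v) :
    ∃ p : G.Walk u v, p.IsPath ∧ ProperWalk (update (update 0 s(a, x) 1) s(x, b) 2) p := by
  rw [mem_closedNeighborSet] at hu hv
  have hax' := hax.ne
  have hxb' := hxb.ne
  by_cases hux : u = x
  · subst hux
    have hv : G.Adj b v := hv.resolve_left (by rintro rfl; exact hnuv hxb)
    refine ⟨.cons hxb hv.toWalk, ?_, ?_⟩ <;>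
      simp [Walk.isPath_def, properWalk_iff, update_apply] <;> grind [hv.ne]
  by_cases hvx : v = x
  · subst hvx
    have hu : G.Adj a u := hu.resolve_left (by rintro rfl; exact hnuv hax)
    refine ⟨.cons hu.symm hax.toWalk, ?_, ?_⟩ <;>
      simp [Walk.isPath_def, properWalk_iff, update_apply] <;> grind [hu.ne]
  rcases hu with rfl | hu <;> rcases hv with rfl | hv
  · refine ⟨.cons hax hxb.toWalk, ?_, ?_⟩ <;>
      simp [Walk.isPath_def, properWalk_iff, update_apply] <;> grind
  · refine ⟨.cons hax (.cons hxb hv.toWalk), ?_, ?_⟩ <;>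
      simp [Walk.isPath_def, properWalk_iff, update_apply] <;> grind [hv.ne]
  · refine ⟨.cons hu.symm (.cons hax hxb.toWalk), ?_, ?_⟩ <;>
      simp [Walk.isPath_def, properWalk_iff, update_apply] <;> grind [hu.ne]
  · have hub : u ≠ b := by rintro rfl; exact hnab hu
    have hva : v ≠ a := by rintro rfl; exact hnab hv.symm
    refine ⟨.cons hu.symm (.cons hax (.cons hxb hv.toWalk)), ?_, ?_⟩ <;>
      simp [Walk.isPath_def, properWalk_iff, update_apply] <;> grind [hu.ne, hv.ne]

theorem exists_properPath_through_edge [DecidableEq V] {x y u v : V} (hxy : G.Adj x y)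
    (hu : u ∈ G.closedNeighborSet x) (hv : v ∈ G.closedNeighborSet y) (huy : u ≠ y) (hvx : v ≠ x) (huv : u ≠ v) :
    ∃ p : G.Walk u v, p.IsPath ∧ ProperWalk (update 0 s(x, y) 1) p := by
  rw [mem_closedNeighborSet] at hu hv
  have hxy' := hxy.ne
  rcases hu with rfl | hu <;> rcases hv with rfl | hv
  · exact exists_properPath_of_adj hxy
  · refine ⟨.cons hxy hv.toWalk, ?_, ?_⟩ <;>
      simp [Walk.isPath_def, properWalk_iff, update_apply] <;> grind [hv.ne]
  · refine ⟨.cons hu.symm hxy.toWalk, ?_, ?_⟩ <;>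
      simp [Walk.isPath_def, properWalk_iff, update_apply] <;> grind [hu.ne]
  · refine ⟨.cons hu.symm (.cons hxy hv.toWalk), ?_, ?_⟩ <;>
      simp [Walk.isPath_def, properWalk_iff, update_apply] <;> grind [hu.ne, hv.ne]

section IndependenceNumberTwo

variable (hα : ∀ a b c : V, a ≠ b → a ≠ c → b ≠ c → G.Adj a b ∨ G.Adj a c ∨ G.Adj b c)
include hα

theorem SimpleGraph.adj_of_notMem_closedNeighborSet {x y z : V} (hxy : x ≠ y)
    (hx : x ∉ G.closedNeighborSet z) (hy : y ∉ G.closedNeighborSet z) : G.Adj x y := by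
  simp only [mem_closedNeighborSet, not_or] at hx hy
  rcases hα x y z hxy hx.1 hy.1 with h | h | h
  exacts [h, absurd h.symm hx.2, absurd h.symm hy.2]

theorem SimpleGraph.mem_closedNeighborSet_or {a b : V} (hab : a ≠ b) (hnab : ¬ G.Adj a b)
    (w : V) :
    w ∈ G.closedNeighborSet a ∨ w ∈ G.closedNeighborSet b := by
  by_contra! h
  rw [mem_closedNeighborSet_comm, mem_closedNeighborSet_comm (v := b)] at h
  exact hnab (adj_of_notMem_closedNeighborSet hα hab h.1 h.2)

theorem SimpleGraph.mem_closedNeighborSet_of_not_adj {a b u v : V} (hab : a ≠ b)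
    (hnab : ¬ G.Adj a b) (huv : u ≠ v) (hnuv : ¬ G.Adj u v) :
    (u ∈ G.closedNeighborSet a ∧ v ∈ G.closedNeighborSet b) ∨
      (v ∈ G.closedNeighborSet a ∧ u ∈ G.closedNeighborSet b) := by
  have hcover := mem_closedNeighborSet_or hα hab hnab
  by_cases hu : u ∈ G.closedNeighborSet a
  · by_cases hv : v ∈ G.closedNeighborSet b
    · exact .inl ⟨hu, hv⟩
    · refine .inr ⟨(hcover v).resolve_right hv, ?_⟩
      by_contra hub
      exact hnuv (adj_of_notMem_closedNeighborSet hα huv hub hv)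
  · refine .inr ⟨?_, (hcover u).resolve_left hu⟩
    by_contra hva
    exact hnuv (adj_of_notMem_closedNeighborSet hα huv hu hva)

theorem properlyConnected_of_forall_closedNeighborSet {a b : V} (hab : a ≠ b)
    (hnab : ¬ G.Adj a b)
    (h : ∀ u ∈ G.closedNeighborSet a, ∀ v ∈ G.closedNeighborSet b, u ≠ v → ¬ G.Adj u v →
      ∃ p : G.Walk u v, p.IsPath ∧ ProperWalk c p) :
    ProperlyConnected G c := by
  intro u v huv
  by_cases hadj : G.Adj u v
  · exact exists_properPath_of_adj hadj
  rcases mem_closedNeighborSet_of_not_adj hα hab hnab huv hadj with ⟨hu, hv⟩ | ⟨hv, hu⟩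
  · exact h u hu v hv huv hadj
  · obtain ⟨p, hp, hpc⟩ := h v hv u hu huv.symm fun h => hadj h.symm
    exact ⟨p.reverse, hp.reverse, hpc.reverse⟩

theorem properlyConnected_of_commonNeighbor [DecidableEq V] {a b x : V} (hab : a ≠ b)
    (hnab : ¬ G.Adj a b) (hax : G.Adj a x) (hxb : G.Adj x b) :
    ProperlyConnected G (update (update 0 s(a, x) 1) s(x, b) 2) :=
  properlyConnected_of_forall_closedNeighborSet hα hab hnab fun _u hu _v hv huv hnuv =>
    exists_properPath_through_commonNeighbor hab hnab hax hxb hu hv huv hnuv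

theorem SimpleGraph.mem_closedNeighborSet_of_disjoint {a b x y : V}
    (hdisj : Disjoint (G.closedNeighborSet a) (G.closedNeighborSet b))
    (hx : x ∈ G.closedNeighborSet a) (hy : y ∈ G.closedNeighborSet a) :
    y ∈ G.closedNeighborSet x := by
  rcases eq_or_ne y x with rfl | hyx
  · exact .inl rfl
  · exact .inr (adj_of_notMem_closedNeighborSet hα hyx.symm
      (hdisj.notMem_of_mem_left hx) (hdisj.notMem_of_mem_left hy))

theorem exists_properlyConnected_of_disjoint [DecidableEq V] (hconn : G.Preconnected) {a b : V}
    (hab : a ≠ b) (hnab : ¬ G.Adj a b)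
    (hdisj : Disjoint (G.closedNeighborSet a) (G.closedNeighborSet b)) :
    ∃ e, ProperlyConnected G (update 0 e 1) := by
  obtain ⟨p⟩ := hconn a b
  obtain ⟨⟨⟨x, y⟩, hxy⟩, -, hx, hy⟩ :=
    p.exists_boundary_dart _ (Set.mem_insert a _) (hdisj.notMem_of_mem_right (Set.mem_insert b _))
  have hy' : y ∈ G.closedNeighborSet b := (mem_closedNeighborSet_or hα hab hnab y).resolve_left hy
  refine ⟨s(x, y), properlyConnected_of_forall_closedNeighborSet hα hab hnab ?_⟩
  intro u hu v hv huv _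
  exact exists_properPath_through_edge hxy (mem_closedNeighborSet_of_disjoint hα hdisj hx hu)
    (mem_closedNeighborSet_of_disjoint hα hdisj.symm hy' hv) (fun h => hy (h ▸ hu))
    (fun h => hdisj.notMem_of_mem_left hx (h ▸ hv)) huv

end IndependenceNumberTwo

end

theorem stmt19_general {V : Type*} (G : SimpleGraph V) (hconn : G.Connected)
    (halpha : ∀ a b c : V, a ≠ b → a ≠ c → b ≠ c →
      G.Adj a b ∨ G.Adj a c ∨ G.Adj b c) :
    pcOpt' G ≤ 2 := by
  classical
  by_cases hcomplete : ∀ u v : V, u ≠ v → G.Adj u v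
  · exact (pcOpt'_le_card_of_support_subset (c := 0) (properlyConnected_of_forall_adj hcomplete)
      ∅ (by simp)).trans (by simp)
  push Not at hcomplete
  obtain ⟨a, b, hab, hnab⟩ := hcomplete
  by_cases hcommon : ∃ x, G.Adj a x ∧ G.Adj x b
  · obtain ⟨x, hax, hxb⟩ := hcommon
    exact (pcOpt'_le_card_of_support_subset
      (properlyConnected_of_commonNeighbor halpha hab hnab hax hxb) {s(a, x), s(x, b)}
      (by simp [support_update_of_ne_zero, Set.insert_subset_iff])).trans Finset.card_le_two
  · obtain ⟨e, he⟩ := exists_properlyConnected_of_disjoint halpha hconn.preconnected hab hnab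
      (disjoint_closedNeighborSet hab hnab hcommon)
    exact (pcOpt'_le_card_of_support_subset he {e} (by simp [support_update_of_ne_zero])).trans
      (by simp)

theorem stmt19 {V : Type*} [Fintype V] (G : SimpleGraph V) (hconn : G.Connected)
    (halpha : ∀ a b c : V, a ≠ b → a ≠ c → b ≠ c →
      G.Adj a b ∨ G.Adj a c ∨ G.Adj b c) :
    pcOpt' G ≤ 2 :=
  stmt19_general G hconn halpha
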